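/- arXiv:1001.2822 — 5 statements merged into one kernel-verified Lean document; each statement's English description precedes it below -/
import Mathlib

section
/- Let R be a Noetherian ring and I an ideal of R such that the associated graded ring G(I) = ⨁_{n≥0} I^n/I^{n+1} is reduced. Then I^n is integrally closed (i.e., equal to its integral closure) for all n ≥ 1. -/
/-- An element `a` of `R` is integral over the ideal `I` if it satisfies an equation
`a ^ r + b 1 * a ^ (r - 1) + ⋯ + b r = 0` with `r ≥ 1` and `b i ∈ I ^ i`. -/
def IsIntegralOverIdeal {R : Type*} [CommRing R] (I : Ideal R) (a : R) : Prop :=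
  ∃ r : ℕ, 0 < r ∧ ∃ b : ℕ → R, (∀ i, 1 ≤ i → i ≤ r → b i ∈ I ^ i) ∧
    a ^ r + ∑ i ∈ Finset.Icc 1 r, b i * a ^ (r - i) = 0

/-- Let `R` be a Noetherian ring and `I` an ideal such that the associated graded
ring `G(I) = ⨁_{n ≥ 0} I^n / I^{n+1}` is reduced.  (Since the nilradical of a commutative
`ℕ`-graded ring is a homogeneous ideal, `G(I)` is reduced if and only if it has no nonzero
nilpotent homogeneous element; a homogeneous element of degree `n` is the class of some
`a ∈ I ^ n`, it is nilpotent iff `a ^ k ∈ I ^ (n * k + 1)` for some `k > 0`, and it is zero iff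
`a ∈ I ^ (n + 1)`.  This is the formulation of reducedness used below.)
Then `I ^ n` is integrally closed for all `n ≥ 1`. -/
theorem pow_integrallyClosed_of_reduced_assocGraded {R : Type*} [CommRing R]
    [IsNoetherianRing R] (I : Ideal R)
    (hred : ∀ n : ℕ, ∀ a ∈ I ^ n, ∀ k : ℕ, 0 < k → a ^ k ∈ I ^ (n * k + 1) → a ∈ I ^ (n + 1)) :
    ∀ n : ℕ, 1 ≤ n → ∀ a : R, IsIntegralOverIdeal (I ^ n) a → a ∈ I ^ n := by
  intro n hn a ha
  obtain ⟨r, hr, b, hb, heq⟩ := ha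
  suffices h : ∀ m, m ≤ n → a ∈ I ^ m from h n le_rfl
  intro m hm
  induction m with
  | zero => simp
  | succ m ih =>
    have ham : a ∈ I ^ m := ih (Nat.le_of_succ_le hm)
    apply hred m a ham r hr
    have har : a ^ r = -∑ i ∈ Finset.Icc 1 r, b i * a ^ (r - i) := by
      linear_combination heq
    rw [har]
    apply neg_mem
    apply Ideal.sum_mem
    intro i hi
    simp only [Finset.mem_Icc] at hi
    have hbi : b i ∈ I ^ (n * i) := by
      have := hb i hi.1 hi.2
      rwa [← pow_mul] at this
    have hai : a ^ (r - i) ∈ I ^ (m * (r - i)) := by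
      rw [pow_mul]
      exact Ideal.pow_mem_pow ham _
    have hmul : b i * a ^ (r - i) ∈ I ^ (n * i + m * (r - i)) := by
      rw [pow_add]
      exact Ideal.mul_mem_mul hbi hai
    refine Ideal.pow_le_pow_right ?_ hmul
    have h1 : m * i ≤ m * r := Nat.mul_le_mul_left m hi.2
    have h2 : m * i + i ≤ n * i := by
      calc m * i + i = (m + 1) * i := by ring
      _ ≤ n * i := Nat.mul_le_mul_right i hm
    have h3 : m * (r - i) = m * r - m * i := Nat.mul_sub ..
    omega
end

section
/- Let R be a Noetherian local ring, M a finite R-module, and A = R ⋉ M the idealization. If a prime ideal P ⋉ M of A is an associated prime of A (as an A-module over itself), then P is an associated prime of R or an associated prime of M as an R-module. -/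
/-!
Write `x = (a, m)` for the element of `R ⋉ M` witnessing the associated prime. Pulled back along
`R → R ⋉ M`, the annihilator of `x` is `Ann a ∩ Ann m`; since taking radicals commutes with
pullback and with `∩`, `P = √(Ann a) ∩ √(Ann m)`. A prime that is the intersection of two ideals equals one of them.
-/

open TrivSqZeroExt

namespace TrivSqZeroExt

variable {R M : Type*}

theorem inl_mul_eq_zero_iff [MonoidWithZero R] [AddMonoid M] [DistribMulAction R M]
    [DistribMulAction Rᵐᵒᵖ M] {r : R} {x : TrivSqZeroExt R M} :
    inl r * x = 0 ↔ r * x.fst = 0 ∧ r • x.snd = 0 := by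
  rw [inl_mul_eq_smul, TrivSqZeroExt.ext_iff]
  rfl

theorem comap_inlHom_colon_singleton [Semiring R] [AddCommMonoid M] [Module R M]
    [Module Rᵐᵒᵖ M] [SMulCommClass R Rᵐᵒᵖ M] (x : TrivSqZeroExt R M) :
    ((⊥ : Ideal (TrivSqZeroExt R M)).colon {x}).comap (inlHom R M) =
      (⊥ : Ideal R).colon {x.fst} ⊓ (⊥ : Submodule R M).colon {x.snd} := by
  ext r
  simp only [Ideal.mem_comap, inlHom_apply, Submodule.mem_inf, Submodule.mem_colon_singleton,
    Submodule.mem_bot, smul_eq_mul]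
  exact inl_mul_eq_zero_iff

theorem comap_inlHom_comap_fstHom [CommSemiring R] [AddCommMonoid M] [Module R M]
    [Module Rᵐᵒᵖ M] [IsCentralScalar R M] (P : Ideal R) :
    (P.comap (fstHom R R M)).comap (inlHom R M) = P := by
  ext r
  rfl

end TrivSqZeroExt

theorem Ideal.IsPrime.eq_or_eq_of_eq_inf {R : Type*} [CommSemiring R] {P I J : Ideal R}
    (hP : P.IsPrime) (h : P = I ⊓ J) : P = I ∨ P = J := by
  have hI : P ≤ I := h ▸ inf_le_left
  have hJ : P ≤ J := h ▸ inf_le_right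
  rcases hP.inf_le.mp h.ge with hIP | hJP
  exacts [Or.inl (hI.antisymm hIP), Or.inr (hJ.antisymm hJP)]

theorem associatedPrime_of_idealization_general {R M : Type*} [CommRing R]
    [AddCommGroup M] [Module R M] [Module Rᵐᵒᵖ M] [IsCentralScalar R M]
    (P : Ideal R)
    (h : IsAssociatedPrime (Ideal.comap (fstHom R R M) P) (TrivSqZeroExt R M)) :
    IsAssociatedPrime P R ∨ IsAssociatedPrime P M := by
  obtain ⟨hprime, x, hx⟩ := h
  have hP : P.IsPrime := comap_inlHom_comap_fstHom (M := M) P ▸ hprime.comap (inlHom R M)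
  have hP_eq : P = ((⊥ : Ideal R).colon {x.fst}).radical ⊓
      ((⊥ : Submodule R M).colon {x.snd}).radical := by
    rw [← Ideal.radical_inf, ← comap_inlHom_colon_singleton, ← Ideal.comap_radical, ← hx,
      comap_inlHom_comap_fstHom]
  rcases hP.eq_or_eq_of_eq_inf hP_eq with h | h
  exacts [Or.inl ⟨hP, _, h⟩, Or.inr ⟨hP, _, h⟩]

/-- Let `R` be a Noetherian local ring, `M` a finite `R`-module, and
`A = R ⋉ M` the idealization.  If the prime ideal `P ⋉ M` of `A` (the preimage of a prime `P`
of `R` under the projection `A → R`) is an associated prime of `A` as a module over itself,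
then `P` is an associated prime of `R` or an associated prime of the `R`-module `M`. -/
theorem associatedPrime_of_idealization {R M : Type*} [CommRing R] [IsNoetherianRing R]
    [IsLocalRing R] [AddCommGroup M] [Module R M] [Module Rᵐᵒᵖ M] [IsCentralScalar R M]
    [Module.Finite R M] (P : Ideal R)
    (h : IsAssociatedPrime (Ideal.comap (fstHom R R M) P) (TrivSqZeroExt R M)) :
    IsAssociatedPrime P R ∨ IsAssociatedPrime P M :=
  associatedPrime_of_idealization_general P h
end

section
/- Let R be a Noetherian local ring, M a finite R-module, and A = R ⋉ M the idealization. If P is an associated prime of the R-module M, then P ⋉ M is an associated prime of the ring A. -/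
open TrivSqZeroExt

/-! The annihilator of `(0, m)` in `R ⋉ M` is `Ann_R(m) ⋉ M`, because `(r, n) * (0, m) = (0, r • m)`.
Radicals commute with `Ideal.comap`, so an associated prime `P = √Ann_R(m)` of `M` gives the
associated prime `P ⋉ M = √Ann((0, m))` of `R ⋉ M`. -/

namespace TrivSqZeroExt

theorem mul_inr {R M : Type*} [Semiring R] [AddCommMonoid M] [Module R M] [Module Rᵐᵒᵖ M]
    (x : TrivSqZeroExt R M) (m : M) : x * inr m = inr (x.fst • m) := by
  ext <;> simp

theorem colon_bot_singleton_inr {R M : Type*} [CommSemiring R] [AddCommMonoid M] [Module R M]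
    [Module Rᵐᵒᵖ M] [IsCentralScalar R M] (m : M) :
    (⊥ : Ideal (TrivSqZeroExt R M)).colon {inr m} =
      ((⊥ : Submodule R M).colon {m}).comap (fstHom R R M) := by
  ext x
  simp only [Submodule.mem_colon_singleton, Ideal.mem_comap, Submodule.mem_bot, smul_eq_mul,
    mul_inr, fstHom_apply]
  exact inr_injective.eq_iff' (inr_zero R)

end TrivSqZeroExt

theorem associatedPrime_idealization_of_module_general {R M : Type*} [CommRing R]
    [AddCommGroup M] [Module R M] [Module Rᵐᵒᵖ M] [IsCentralScalar R M]
    (P : Ideal R) (h : IsAssociatedPrime P M) :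
    IsAssociatedPrime (Ideal.comap (fstHom R R M) P) (TrivSqZeroExt R M) := by
  obtain ⟨hP, m, rfl⟩ := h
  refine ⟨hP.comap _, inr m, ?_⟩
  rw [colon_bot_singleton_inr, Ideal.comap_radical]

/-- Let `R` be a Noetherian local ring, `M` a finite `R`-module, and
`A = R ⋉ M` the idealization.  If `P` is an associated prime of the `R`-module `M`, then
`P ⋉ M` (the preimage of `P` under the projection `A → R`) is an associated prime of the
ring `A` as a module over itself. -/
theorem associatedPrime_idealization_of_module {R M : Type*} [CommRing R] [IsNoetherianRing R]
    [IsLocalRing R] [AddCommGroup M] [Module R M] [Module Rᵐᵒᵖ M] [IsCentralScalar R M]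
    [Module.Finite R M] (P : Ideal R) (h : IsAssociatedPrime P M) :
    IsAssociatedPrime (Ideal.comap (fstHom R R M) P) (TrivSqZeroExt R M) :=
  associatedPrime_idealization_of_module_general P h
end

section
/- Let (R,m) be a Noetherian local ring, M a finite R-module with dim M = 1, and a a parameter for M. Then for n ≫ 0, λ(M/a^n M) = n·e_0((a),M) − e_1((a),M) with e_1((a),M) = −λ(H^0_m(M)). In particular e_1((a),M) ≤ 0, and e_1((a),M) = 0 if and only if M is Cohen–Macaulay. -/
/-- `HasLength R M n` : the `R`-module `M` has finite length `n`. -/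
def HasLength (R M : Type*) [Ring R] [AddCommGroup M] [Module R M] (n : ℕ) : Prop :=
  ∃ s : CompositionSeries (Submodule R M), s.head = ⊥ ∧ s.last = ⊤ ∧ s.length = n

/-!
The `m`-power torsion `N = H⁰_m(M)` coincides with the `a`-power torsion `T` of `M`: since `M/aM`
has finite length, `mᵏM ⊆ aM` for some `k`, and `T` meets `aˢM` trivially for `s ≫ 0` (Fitting).
For the same reason `0 → T → M/aⁿM → M'/aⁿM' → 0` is exact for `n ≫ 0`, where `M' = M/T`. As `a`
is `M'`-regular, the filtration `aⁱM'/aⁱ⁺¹M' ≅ M'/aM'` gives `λ(M'/aⁿM') = n·λ(M'/aM')`, whence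
`λ(M/aⁿM) = n·e₀ + λ(N)`. Finally `N = 0` iff `a` is `M`-regular iff some element of `m` is.
-/

open Module Submodule

section Ring

variable {R M : Type*} [Ring R] [AddCommGroup M] [Module R M]

theorem hasLength_iff_length_eq {n : ℕ} : HasLength R M n ↔ length R M = n := by
  constructor
  · rintro ⟨s, hs₁, hs₂, rfl⟩
    exact (length_compositionSeries s hs₁ hs₂).symm
  · intro h
    obtain ⟨s, hs₁, hs₂⟩ := isFiniteLength_iff_exists_compositionSeries.mp
      (length_ne_top_iff.mp (h ▸ ENat.natCast_ne_top n))
    exact ⟨s, hs₁, hs₂, by exact_mod_cast (length_compositionSeries s hs₁ hs₂).trans h⟩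

theorem Module.length_quotient_eq_add_of_le {P Q : Submodule R M} (h : P ≤ Q) :
    length R (M ⧸ P) = length R (Q.map P.mkQ) + length R (M ⧸ Q) := by
  rw [length_eq_add_of_exact _ _ (Q.map P.mkQ).injective_subtype (Q.map P.mkQ).mkQ_surjective
    (LinearMap.exact_subtype_mkQ _), (quotientQuotientEquivQuotient P Q h).length_eq]

theorem Module.length_quotient_eq_add_of_disjoint {N P : Submodule R M} (h : Disjoint N P) :
    length R (M ⧸ P) = length R N + length R (M ⧸ (P ⊔ N)) := by
  have hinj : Function.Injective (P.mkQ ∘ₗ N.subtype) := by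
    rw [← LinearMap.ker_eq_bot, LinearMap.ker_comp, ker_mkQ, ← disjoint_iff_comap_eq_bot]
    exact h
  have hrange : LinearMap.range (P.mkQ ∘ₗ N.subtype) = (P ⊔ N).map P.mkQ := by
    rw [LinearMap.range_comp, range_subtype, Submodule.map_sup, mkQ_map_self, bot_sup_eq]
  rw [length_quotient_eq_add_of_le le_sup_left,
    ((LinearEquiv.ofInjective _ hinj).trans (LinearEquiv.ofEq _ _ hrange)).length_eq]

end Ring

section CommRing

variable {R M : Type*} [CommRing R] [AddCommGroup M] [Module R M]

theorem Submodule.mem_ideal_span_singleton_smul_top {a : R} {x : M} :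
    x ∈ (Ideal.span {a} • ⊤ : Submodule R M) ↔ ∃ y, a • y = x := by
  simp [ideal_span_singleton_smul, mem_smul_pointwise_iff_exists]

theorem Module.End.range_algebraMap (a : R) :
    LinearMap.range (algebraMap R (End R M) a) = Ideal.span {a} • ⊤ := by
  ext x
  simp [mem_ideal_span_singleton_smul_top]

/-- Multiplication by `a ^ n` identifies `M ⧸ aM` with `aⁿM ⧸ aⁿ⁺¹M`. -/
noncomputable def IsSMulRegular.quotientSpanSMulTopEquivMapPow {a : R} (ha : IsSMulRegular M a)
    (n : ℕ) :
    (M ⧸ (Ideal.span {a} • ⊤ : Submodule R M)) ≃ₗ[R]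
      (Ideal.span {a ^ n} • ⊤ : Submodule R M).map
        (Ideal.span {a ^ (n + 1)} • ⊤ : Submodule R M).mkQ :=
  let φ := (Ideal.span {a ^ (n + 1)} • ⊤ : Submodule R M).mkQ ∘ₗ algebraMap R (End R M) (a ^ n)
  have hker : LinearMap.ker φ = Ideal.span {a} • ⊤ := by
    ext x
    simp only [φ, LinearMap.mem_ker, LinearMap.comp_apply, Module.algebraMap_end_apply,
      mkQ_apply, Quotient.mk_eq_zero, mem_ideal_span_singleton_smul_top, pow_succ, mul_smul]
    exact ⟨fun ⟨y, hy⟩ ↦ ⟨y, (ha.pow n) hy⟩, fun ⟨y, hy⟩ ↦ ⟨y, congrArg _ hy⟩⟩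
  have hrange : LinearMap.range φ = (Ideal.span {a ^ n} • ⊤ : Submodule R M).map
      (Ideal.span {a ^ (n + 1)} • ⊤ : Submodule R M).mkQ := by
    rw [LinearMap.range_comp, End.range_algebraMap]
  (quotEquivOfEq _ _ hker.symm).trans (φ.quotKerEquivRange.trans (LinearEquiv.ofEq _ _ hrange))

theorem IsSMulRegular.length_quotient_span_pow_smul_top {a : R} (ha : IsSMulRegular M a) (n : ℕ) :
    length R (M ⧸ (Ideal.span {a ^ n} • ⊤ : Submodule R M)) =
      n * length R (M ⧸ (Ideal.span {a} • ⊤ : Submodule R M)) := by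
  induction n with
  | zero => simp
  | succ n ih =>
    have hle : (Ideal.span {a ^ (n + 1)} • ⊤ : Submodule R M) ≤ Ideal.span {a ^ n} • ⊤ :=
      smul_mono_left (Ideal.span_singleton_le_span_singleton.mpr (pow_dvd_pow a n.le_succ))
    rw [length_quotient_eq_add_of_le hle, ← (ha.quotientSpanSMulTopEquivMapPow n).length_eq, ih]
    push_cast
    ring

theorem Submodule.mem_torsion'_powers_iff {a : R} {x : M} :
    x ∈ torsion' R M (Submonoid.powers a) ↔ ∃ n : ℕ, a ^ n • x = 0 := by
  simp [mem_torsion'_iff, Submonoid.mem_powers_iff]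

theorem Submodule.torsion'_powers_eq_bot_iff {a : R} :
    torsion' R M (Submonoid.powers a) = ⊥ ↔ IsSMulRegular M a := by
  rw [eq_bot_iff]
  constructor
  · refine fun h ↦ isSMulRegular_iff_right_eq_zero_of_smul.mpr fun x hx ↦ ?_
    exact (mem_bot R).mp (h (mem_torsion'_powers_iff.mpr ⟨1, by rwa [pow_one]⟩))
  · intro h x hx
    obtain ⟨n, hn⟩ := mem_torsion'_powers_iff.mp hx
    exact (mem_bot R).mpr ((h.pow n).right_eq_zero_of_smul hn)

theorem Submodule.isSMulRegular_quotient_torsion'_powers (a : R) :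
    IsSMulRegular (M ⧸ torsion' R M (Submonoid.powers a)) a := by
  refine isSMulRegular_iff_right_eq_zero_of_smul.mpr fun x hx ↦ ?_
  induction x using Submodule.Quotient.induction_on with | H x => ?_
  rw [← Quotient.mk_smul, Quotient.mk_eq_zero, mem_torsion'_powers_iff] at hx
  rw [Quotient.mk_eq_zero, mem_torsion'_powers_iff]
  obtain ⟨n, hn⟩ := hx
  exact ⟨n + 1, by rw [pow_succ, mul_smul, hn]⟩

theorem Submodule.eventually_disjoint_torsion'_powers_span_pow_smul_top [IsNoetherian R M]
    (a : R) : ∀ᶠ n in Filter.atTop,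
      Disjoint (torsion' R M (Submonoid.powers a)) (Ideal.span {a ^ n} • ⊤ : Submodule R M) := by
  filter_upwards [(algebraMap R (End R M) a).eventually_disjoint_ker_pow_range_pow,
    (algebraMap R (End R M) a).eventually_iSup_ker_pow_eq] with n hdisj hsup
  rw [← map_pow, End.range_algebraMap] at hdisj
  refine hdisj.mono_left fun x hx ↦ ?_
  obtain ⟨m, hm⟩ := mem_torsion'_powers_iff.mp hx
  rw [map_pow, ← hsup]
  exact mem_iSup_of_mem m (by simpa [← map_pow] using hm)

theorem Submodule.pow_smul_le_pow_smul {I J : Ideal R} {N : Submodule R M} (h : I • N ≤ J • N)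
    (s : ℕ) : I ^ s • N ≤ J ^ s • N := by
  induction s with
  | zero => simp
  | succ s ih =>
    calc I ^ (s + 1) • N = I ^ s • I • N := by rw [pow_succ, mul_smul]
      _ ≤ I ^ s • J • N := smul_mono_right _ h
      _ = J • I ^ s • N := by rw [← mul_smul, mul_comm, mul_smul]
      _ ≤ J • J ^ s • N := smul_mono_right _ ih
      _ = J ^ (s + 1) • N := by rw [pow_succ', mul_smul]

/-- `I^(k s) M ⊆ aˢM`, which meets the `a`-power torsion trivially once `s` is large. -/
theorem Submodule.mem_torsion'_powers_iff_of_pow_smul_top_le [IsNoetherian R M] {a : R}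
    {I : Ideal R} (ha : a ∈ I) {k : ℕ} (hk : (I ^ k • ⊤ : Submodule R M) ≤ Ideal.span {a} • ⊤)
    {x : M} : x ∈ torsion' R M (Submonoid.powers a) ↔ ∃ j : ℕ, ∀ r ∈ I ^ j, r • x = 0 := by
  constructor
  · intro hx
    obtain ⟨s, hs⟩ := (eventually_disjoint_torsion'_powers_span_pow_smul_top (M := M) a).exists
    have hle : (I ^ (k * s) • ⊤ : Submodule R M) ≤ Ideal.span {a ^ s} • ⊤ := by
      rw [pow_mul, ← Ideal.span_singleton_pow]
      exact pow_smul_le_pow_smul hk s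
    exact ⟨k * s, fun r hr ↦ hs.le_bot ⟨smul_mem _ r hx, hle (smul_mem_smul hr mem_top)⟩⟩
  · rintro ⟨j, hj⟩
    exact mem_torsion'_powers_iff.mpr ⟨j, hj _ (Ideal.pow_mem_pow ha j)⟩

theorem Module.eventually_length_quotient_span_pow_smul_top [IsNoetherian R M] (a : R) :
    ∀ᶠ n : ℕ in Filter.atTop, length R (M ⧸ (Ideal.span {a ^ n} • ⊤ : Submodule R M)) =
      length R (torsion' R M (Submonoid.powers a)) +
        n * length R ((M ⧸ torsion' R M (Submonoid.powers a)) ⧸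
          (Ideal.span {a} • ⊤ : Submodule R (M ⧸ torsion' R M (Submonoid.powers a)))) := by
  set T := torsion' R M (Submonoid.powers a)
  filter_upwards [eventually_disjoint_torsion'_powers_span_pow_smul_top (M := M) a] with n hn
  have hmap : (Ideal.span {a ^ n} • ⊤ ⊔ T).map T.mkQ =
      (Ideal.span {a ^ n} • ⊤ : Submodule R (M ⧸ T)) := by
    rw [Submodule.map_sup, mkQ_map_self, sup_bot_eq, map_smul'', Submodule.map_top, range_mkQ]
  rw [length_quotient_eq_add_of_disjoint hn,
    ← (isSMulRegular_quotient_torsion'_powers a).length_quotient_span_pow_smul_top n, ← hmap,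
    (quotientQuotientEquivQuotient T _ le_sup_right).length_eq]

theorem Module.length_ne_top_of_isArtinianRing_quotient_annihilator [Module.Finite R M]
    [IsArtinianRing (R ⧸ Module.annihilator R M)] : length R M ≠ ⊤ := by
  let := quotientAnnihilator (R := R) (M := M)
  have : IsScalarTower R (R ⧸ Module.annihilator R M) M :=
    (isTorsionBySet_annihilator R M).isScalarTower
  have : Module.Finite (R ⧸ Module.annihilator R M) M := .of_restrictScalars_finite R _ _
  rw [length_eq_of_surjective (R := R ⧸ Module.annihilator R M) Ideal.Quotient.mk_surjective]
  exact length_ne_top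

theorem Module.length_quotient_ideal_smul_top_le {M' : Type*} [AddCommGroup M'] [Module R M']
    {f : M →ₗ[R] M'} (hf : Function.Surjective f) (I : Ideal R) :
    length R (M' ⧸ (I • ⊤ : Submodule R M')) ≤ length R (M ⧸ (I • ⊤ : Submodule R M)) := by
  refine length_le_of_surjective (mapQ _ _ f (smul_top_le_comap_smul_top I f)) fun y ↦ ?_
  obtain ⟨y, rfl⟩ := Submodule.Quotient.mk_surjective _ y
  obtain ⟨x, rfl⟩ := hf y
  exact ⟨Submodule.Quotient.mk x, rfl⟩

theorem Submodule.smul_top_le_of_le_annihilator_quotient {I : Ideal R} {P : Submodule R M}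
    (h : I ≤ Module.annihilator R (M ⧸ P)) : I • ⊤ ≤ P := by
  refine smul_le.mpr fun r hr x _ ↦ ?_
  rw [← Quotient.mk_eq_zero, Quotient.mk_smul]
  exact Module.mem_annihilator.mp (h hr) _

end CommRing

theorem chern_number_dim_one_general {R M : Type*} [CommRing R] [IsNoetherianRing R]
    [IsLocalRing R] [AddCommGroup M] [Module R M] [Module.Finite R M]
    (N : Submodule R M)
    (hN : ∀ x : M, x ∈ N ↔ ∃ k : ℕ, ∀ r ∈ (IsLocalRing.maximalIdeal R) ^ k, r • x = 0)
    (a : R) (ha : a ∈ IsLocalRing.maximalIdeal R)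
    (hpar : ringKrullDim (R ⧸ Module.annihilator R (M ⧸ (Ideal.span {a} • ⊤ : Submodule R M)))
      = 0)
    (lN : ℕ) (hlN : HasLength R N lN) :
    ∃ e0 : ℕ, ∃ n0 : ℕ,
      (∀ n ≥ n0, ∃ l : ℕ,
        HasLength R (M ⧸ (Ideal.span {a ^ n} • ⊤ : Submodule R M)) l ∧
        (l : ℤ) = n * e0 - (-(lN : ℤ))) ∧
      (-(lN : ℤ) ≤ 0) ∧
      ((-(lN : ℤ) = 0) ↔ ∃ b ∈ IsLocalRing.maximalIdeal R, IsSMulRegular M b) := by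
  have : IsArtinianRing (R ⧸ Module.annihilator R (M ⧸ (Ideal.span {a} • ⊤ : Submodule R M))) :=
    isArtinianRing_iff_krullDimLE_zero.mpr (Ring.krullDimLE_iff.mpr hpar.le)
  obtain ⟨k, hk⟩ := IsLocalRing.exists_maximalIdeal_pow_le_of_isArtinianRing_quotient
    (Module.annihilator R (M ⧸ (Ideal.span {a} • ⊤ : Submodule R M)))
  obtain rfl : torsion' R M (Submonoid.powers a) = N := ext fun x ↦ by
    rw [hN, mem_torsion'_powers_iff_of_pow_smul_top_le ha
      (smul_top_le_of_le_annihilator_quotient hk)]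
  obtain ⟨n0, hn0⟩ :=
    (eventually_length_quotient_span_pow_smul_top (M := M) a).exists_forall_of_atTop
  have hfin := ne_top_of_le_ne_top length_ne_top_of_isArtinianRing_quotient_annihilator
    (length_quotient_ideal_smul_top_le (torsion' R M (Submonoid.powers a)).mkQ_surjective
      (Ideal.span {a}))
  obtain ⟨e0, he0⟩ := ENat.ne_top_iff_exists.mp hfin
  refine ⟨e0, n0, fun n hn ↦ ⟨lN + n * e0, hasLength_iff_length_eq.mpr ?_, by push_cast; ring⟩,
    by omega, ?_⟩
  · rw [hn0 n hn, hasLength_iff_length_eq.mp hlN, ← he0]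
    norm_cast
  rw [neg_eq_zero, Nat.cast_eq_zero, ← Nat.cast_eq_zero (R := ℕ∞),
    ← hasLength_iff_length_eq.mp hlN, length_eq_zero_iff, subsingleton_iff_eq_bot]
  refine ⟨fun h ↦ ⟨a, ha, torsion'_powers_eq_bot_iff.mp h⟩, fun ⟨b, hb, hb_reg⟩ ↦ ?_⟩
  refine eq_bot_iff.mpr fun x hx ↦ (mem_bot R).mpr ?_
  obtain ⟨j, hj⟩ := (hN x).mp hx
  exact (hb_reg.pow j).right_eq_zero_of_smul (hj _ (Ideal.pow_mem_pow hb j))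

/-- Let `(R, m)` be a Noetherian local ring, `M` a finite `R`-module with
`dim M = 1`, and `a` a parameter for `M`.  Then for `n ≫ 0`,
`λ(M/aⁿM) = n·e₀((a),M) − e₁((a),M)` where the Chern number is `e₁((a),M) = −λ(H⁰_m(M))`.
In particular `e₁((a),M) ≤ 0`, and `e₁((a),M) = 0` if and only if `M` is Cohen–Macaulay
(for a `1`-dimensional module this means the existence of an `M`-regular element in `m`). -/
theorem chern_number_dim_one {R M : Type*} [CommRing R] [IsNoetherianRing R]
    [IsLocalRing R] [AddCommGroup M] [Module R M] [Module.Finite R M]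
    (hdim : ringKrullDim (R ⧸ Module.annihilator R M) = 1)
    (N : Submodule R M)
    (hN : ∀ x : M, x ∈ N ↔ ∃ k : ℕ, ∀ r ∈ (IsLocalRing.maximalIdeal R) ^ k, r • x = 0)
    (a : R) (ha : a ∈ IsLocalRing.maximalIdeal R)
    (hpar : ringKrullDim (R ⧸ Module.annihilator R (M ⧸ (Ideal.span {a} • ⊤ : Submodule R M)))
      = 0)
    (lN : ℕ) (hlN : HasLength R N lN) :
    ∃ e0 : ℕ, ∃ n0 : ℕ,
      (∀ n ≥ n0, ∃ l : ℕ,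
        HasLength R (M ⧸ (Ideal.span {a ^ n} • ⊤ : Submodule R M)) l ∧
        (l : ℤ) = n * e0 - (-(lN : ℤ))) ∧
      (-(lN : ℤ) ≤ 0) ∧
      ((-(lN : ℤ) = 0) ↔ ∃ b ∈ IsLocalRing.maximalIdeal R, IsSMulRegular M b) :=
  chern_number_dim_one_general N hN a ha hpar lN hlN
end

section
/- Let (R,m) be a d-dimensional Noetherian local ring, J a parameter ideal, and F = {J_n} a J-admissible filtration. Set A = R[Jt], B = ⨁_{n≥0} J_n t^n, and M = B/A = ⨁_{n≥1} J_n/J^n. If ht(A :_A B) = 1, then e_1(F) ≤ e_1(J) + Σ_{n≥1} λ(J_n / J·J_{n−1}). -/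
/-!
Write `λ` for length and `J = (x₁, …, x_d)`. The ideals `J ^ (n + 1 - m) * J_m`,
`0 ≤ m ≤ n + 1`, descend from `J ^ (n + 1)` to `J_{n+1}`. The step from
`J ^ (n - m) * (J * J_m)` to `J ^ (n - m) * J_{m+1}` costs at most
`μ(J ^ (n - m)) ≤ C(n + d - 1, d - 1)` copies of `λ(J_{m+1} / J J_m)`, because multiplication by
a monomial generator `t` of `J ^ (n - m)` maps `J_{m+1} / J J_m` onto the piece that `t J_{m+1}`
adds. Hence for `n ≫ 0`
`0 ≤ λ(R / J ^ (n + 1)) - λ(R / J_{n+1}) ≤ C(n + d - 1, d - 1) · ∑ₘ λ(J_{m+1} / J J_m)`.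
The middle term is `∑ᵢ (-1)ⁱ (eᵢ(J) - eᵢ(F)) C(n + d - i, d - i)`, and comparing growth rates
first forces `e₀(F) = e₀(J)` and then bounds `e₁(F) - e₁(J)` by the sum.
-/

open Finset Module

section Length

variable {R M N : Type*} [Ring R] [AddCommGroup M] [Module R M] [AddCommGroup N] [Module R N]

theorem HasLength.length_eq {n : ℕ} (h : HasLength R M n) : length R M = n := by
  obtain ⟨s, hs₁, hs₂, rfl⟩ := h
  exact (length_compositionSeries s hs₁ hs₂).symm

namespace Module

theorem length_map_le (f : M →ₗ[R] N) (p : Submodule R M) : length R (p.map f) ≤ length R p :=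
  length_le_of_surjective _ (f.submoduleMap_surjective p)

theorem length_quotient_eq_add {Q P : Submodule R M} (h : Q ≤ P) :
    length R (M ⧸ Q) = length R (Submodule.map Q.mkQ P) + length R (M ⧸ P) := by
  rw [length_eq_add_of_exact _ _ (Submodule.injective_subtype _) (Submodule.mkQ_surjective _)
    (LinearMap.exact_subtype_mkQ (Submodule.map Q.mkQ P)),
    (Submodule.quotientQuotientEquivQuotient Q P h).length_eq]

theorem length_quotient_le_of_le {Q P : Submodule R M} (h : Q ≤ P) :
    length R (M ⧸ P) ≤ length R (M ⧸ Q) :=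
  (length_quotient_eq_add h).symm ▸ le_add_self

end Module

theorem HasLength.le_of_le {Q P : Submodule R M} {p q : ℕ} (h : Q ≤ P)
    (hP : HasLength R (M ⧸ P) p) (hQ : HasLength R (M ⧸ Q) q) : p ≤ q := by
  simpa [hP.length_eq, hQ.length_eq] using length_quotient_le_of_le h

end Length

namespace Ideal

variable {R : Type*} [CommRing R]

theorem length_quotient_le_of_span_singleton_mul_le {Q P B : Ideal R} (t : R)
    (hB : span {t} * Q ≤ B) :
    length R (R ⧸ B) ≤
      length R (R ⧸ (B ⊔ span {t} * P)) + length R (Submodule.map Q.mkQ P) := by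
  rw [length_quotient_eq_add le_sup_left, add_comm]
  gcongr
  let mul_t : R ⧸ Q →ₗ[R] R ⧸ B :=
    Q.mapQ B (LinearMap.mulLeft R t) fun q hq ↦ hB (mul_mem_mul (mem_span_singleton_self t) hq)
  have himage : Submodule.map B.mkQ (B ⊔ span {t} * P) =
      Submodule.map mul_t (Submodule.map Q.mkQ P) := by
    rw [Submodule.map_sup, Submodule.mkQ_map_self, bot_sup_eq, ← Submodule.map_comp,
      Submodule.mapQ_mkQ, Submodule.map_comp]
    congr 1
    ext r
    simp [mem_span_singleton_mul]
  rw [himage]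
  exact length_map_le _ _

theorem length_quotient_le_of_forall_span_singleton_mul_le {Q B : Ideal R} (P : Ideal R)
    (T : Finset R) (hB : ∀ t ∈ T, span {t} * Q ≤ B) :
    length R (R ⧸ B) ≤
      length R (R ⧸ (B ⊔ span T * P)) + #T * length R (Submodule.map Q.mkQ P) := by
  classical
  induction T using Finset.induction_on with
  | empty =>
    rw [coe_empty, span_empty, bot_mul, sup_bot_eq]
    simp
  | @insert a T ha ih =>
    have hsup : B ⊔ span (↑(insert a T) : Set R) * P = (B ⊔ span T * P) ⊔ span {a} * P := by
      rw [coe_insert, span_insert, Submodule.sup_mul, sup_comm (span {a} * P), sup_assoc]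
    have hT := ih fun t ht ↦ hB t (mem_insert_of_mem ht)
    have ha := length_quotient_le_of_span_singleton_mul_le (P := P) a
      ((hB a (mem_insert_self a T)).trans (le_sup_left (b := span T * P)))
    rw [← hsup] at ha
    rw [card_insert_of_notMem ‹a ∉ T›]
    push_cast
    calc _ ≤ _ := hT
      _ ≤ _ := add_le_add_left ha _
      _ = _ := by ring

theorem length_quotient_span_mul_le {Q P : Ideal R} (T : Finset R) (hQP : Q ≤ P) :
    length R (R ⧸ span T * Q) ≤
      length R (R ⧸ span T * P) + #T * length R (Submodule.map Q.mkQ P) := by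
  have h := length_quotient_le_of_forall_span_singleton_mul_le (Q := Q) P T fun t ht ↦
    mul_mono_left (span_mono (Set.singleton_subset_iff.2 ht))
  rwa [sup_eq_right.2 (mul_mono_right hQP)] at h

theorem multiset_prod_mem_pow {I : Ideal R} {s : Multiset R} (hs : ∀ r ∈ s, r ∈ I) :
    s.prod ∈ I ^ Multiset.card s := by
  induction s using Multiset.induction_on with
  | empty => simp
  | cons r s ih =>
    rw [Multiset.prod_cons, Multiset.card_cons, pow_succ']
    exact mul_mem_mul (hs r (Multiset.mem_cons_self r s))
      (ih fun r' hr' ↦ hs r' (Multiset.mem_cons_of_mem hr'))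

theorem exists_finset_card_le_span_eq_pow {d : ℕ} (x : Fin d → R) (a : ℕ) :
    ∃ T : Finset R,
      #T ≤ (a + d - 1).choose (d - 1) ∧ span (T : Set R) = span (Set.range x) ^ a := by
  classical
  refine ⟨univ.image fun m : Sym (Fin d) a ↦ (m.1.map x).prod, ?_, le_antisymm ?_ ?_⟩
  · refine card_image_le.trans ?_
    rw [card_univ, Sym.card_sym_eq_choose, Fintype.card_fin]
    rcases d with _ | d
    · cases a <;> simp
    · simp only [Nat.add_sub_cancel, add_comm (d + 1), Nat.add_sub_assoc le_add_self]
      exact (Nat.choose_symm_add).le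
  · rw [span_le]
    intro r hr
    obtain ⟨m, -, rfl⟩ := mem_image.1 (mem_coe.1 hr)
    have hm := multiset_prod_mem_pow (I := span (Set.range x)) (s := m.1.map x) <| by
      simpa using fun i _ ↦ subset_span (Set.mem_range_self i)
    simpa using hm
  · rw [span, Submodule.span_pow]
    refine Submodule.span_mono ?_
    intro r hr
    obtain ⟨f, hf, rfl⟩ := Set.mem_pow_iff_prod.1 hr
    choose g hg using hf
    refine mem_coe.2 (mem_image.2 ⟨⟨univ.val.map g, by simp⟩, mem_univ _, ?_⟩)
    simp [Function.comp_def, hg, prod_eq_multiset_prod]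

theorem length_quotient_pow_mul_le {d : ℕ} (x : Fin d → R) (a : ℕ) {Q P : Ideal R}
    (hQP : Q ≤ P) :
    length R (R ⧸ span (Set.range x) ^ a * Q) ≤ length R (R ⧸ span (Set.range x) ^ a * P) +
      (a + d - 1).choose (d - 1) * length R (Submodule.map Q.mkQ P) := by
  obtain ⟨T, hcard, hT⟩ := exists_finset_card_le_span_eq_pow x a
  rw [← hT]
  refine (length_quotient_span_mul_le T hQP).trans ?_
  gcongr

theorem length_quotient_pow_succ_le {d : ℕ} (x : Fin d → R) {F : ℕ → Ideal R}
    (hF0 : F 0 = ⊤) (hF : ∀ m, span (Set.range x) * F m ≤ F (m + 1)) (n : ℕ) :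
    length R (R ⧸ span (Set.range x) ^ (n + 1)) ≤ length R (R ⧸ F (n + 1)) +
      (n + d - 1).choose (d - 1) * ∑ m ∈ range (n + 1),
        length R (Submodule.map (span (Set.range x) * F m).mkQ (F (m + 1))) := by
  set J := span (Set.range x)
  set δ := fun m ↦ length R (Submodule.map (J * F m).mkQ (F (m + 1)))
  set K : ℕ∞ := ↑((n + d - 1).choose (d - 1))
  have key : ∀ k ≤ n + 1,
      length R (R ⧸ J ^ (n + 1)) ≤
        length R (R ⧸ J ^ (n + 1 - k) * F k) + K * ∑ m ∈ range k, δ m := by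
    intro k hk
    induction k with
    | zero => rw [Nat.sub_zero, hF0, mul_top]; simp
    | succ k ih =>
      have hsplit : J ^ (n + 1 - k) * F k = J ^ (n - k) * (J * F k) := by
        rw [← mul_assoc, ← pow_succ, show n + 1 - k = n - k + 1 by omega]
      have hK : ((n - k + d - 1).choose (d - 1) : ℕ∞) ≤ K :=
        Nat.cast_le.2 (Nat.choose_le_choose _ (by omega))
      calc _ ≤ length R (R ⧸ J ^ (n + 1 - k) * F k) + K * ∑ m ∈ range k, δ m :=
            ih (by omega)
        _ ≤ length R (R ⧸ J ^ (n - k) * F (k + 1)) + K * δ k + K * ∑ m ∈ range k, δ m := by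
          rw [hsplit]
          grw [length_quotient_pow_mul_le x (n - k) (hF k), hK]
        _ = _ := by rw [sum_range_succ, Nat.add_sub_add_right]; ring
  have := key (n + 1) le_rfl
  rwa [Nat.sub_self, pow_zero, one_mul] at this

theorem length_pow_succ_le_of_hasLength {d N : ℕ} (x : Fin d → R) {F : ℕ → Ideal R}
    (hF0 : F 0 = ⊤) (hF : ∀ m, span (Set.range x) * F m ≤ F (m + 1))
    (hstab : ∀ m ≥ N, F (m + 1) = span (Set.range x) * F m) {lF lJ lJF : ℕ → ℕ}
    (hlF : ∀ n, HasLength R (R ⧸ F n) (lF n))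
    (hlJ : ∀ n, HasLength R (R ⧸ span (Set.range x) ^ n) (lJ n))
    (hlJF : ∀ n, HasLength R (R ⧸ span (Set.range x) * F n) (lJF n)) {n : ℕ} (hn : N ≤ n) :
    (lJ (n + 1) : ℤ) ≤
      lF (n + 1) +
        (n + d - 1).choose (d - 1) * ∑ m ∈ range N, ((lJF m : ℤ) - lF (m + 1)) := by
  have hδ : ∀ m, length R (Submodule.map (span (Set.range x) * F m).mkQ (F (m + 1))) =
      ↑(lJF m - lF (m + 1)) := fun m ↦ by
    have h := length_quotient_eq_add (hF m)
    rw [(hlJF m).length_eq, (hlF (m + 1)).length_eq] at h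
    rw [ENat.natCast_sub, h, (ENat.addLECancellable_natCast _).add_tsub_cancel_right]
  have hδ_stable : ∀ m ≥ N, lJF m - lF (m + 1) = 0 := fun m hm ↦ by
    have h := (hlF (m + 1)).length_eq
    rw [hstab m hm, (hlJF m).length_eq, Nat.cast_inj] at h
    omega
  have hsum : ∑ m ∈ range (n + 1),
      length R (Submodule.map (span (Set.range x) * F m).mkQ (F (m + 1))) =
        ↑(∑ m ∈ range N, (lJF m - lF (m + 1))) := by
    rw [sum_congr rfl fun m _ ↦ hδ m, ← Nat.cast_sum,
      ← sum_range_add_sum_Ico _ (by omega : N ≤ n + 1),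
      sum_eq_zero fun m hm ↦ hδ_stable m (mem_Ico.1 hm).1, add_zero]
  have h := length_quotient_pow_succ_le x hF0 hF n
  rw [(hlJ _).length_eq, (hlF _).length_eq, hsum] at h
  have h' : lJ (n + 1) ≤
      lF (n + 1) + (n + d - 1).choose (d - 1) * ∑ m ∈ range N, (lJF m - lF (m + 1)) :=
    mod_cast h
  have := (Nat.cast_le (α := ℤ)).2 h'
  push_cast [Nat.cast_sum, Nat.cast_sub ((hlF _).le_of_le (hF _) (hlJF _))] at this
  exact this
end Ideal

/-- `binomialSum e (fun i ↦ (-1) ^ i * eᵢ) n` is the Hilbert–Samuel polynomial with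
coefficients `eᵢ`, evaluated at `n + 1`. -/
def binomialSum (e : ℕ) (c : ℕ → ℤ) (n : ℕ) : ℤ :=
  ∑ i ∈ range (e + 1), c i * ((n + e - i).choose (e - i) : ℤ)

theorem binomialSum_sub (e : ℕ) (c₁ c₂ : ℕ → ℤ) (n : ℕ) :
    binomialSum e (c₁ - c₂) n = binomialSum e c₁ n - binomialSum e c₂ n := by
  simp only [binomialSum, Pi.sub_apply, sub_mul, sum_sub_distrib]

theorem binomialSum_succ_of_eq_zero {e : ℕ} {c : ℕ → ℤ} (hc : c 0 = 0) (n : ℕ) :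
    binomialSum (e + 1) c n = binomialSum e (fun i ↦ c (i + 1)) n := by
  simp [binomialSum, sum_range_succ' _ (e + 1), hc, ← add_assoc]

theorem binomialSum_single_one (e : ℕ) (S : ℤ) (n : ℕ) :
    binomialSum (e + 1) (Pi.single 1 S) n = (n + e).choose e * S := by
  rw [binomialSum, sum_eq_single_of_mem 1 (by simp)]
  · simp [mul_comm]
  · intro i _ hi
    simp [hi]

theorem binomialSum_succ_le (e : ℕ) (c : ℕ → ℤ) (n : ℕ) :
    binomialSum (e + 1) c n ≤
      c 0 * (n + e + 1).choose (e + 1) +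
        (∑ i ∈ range (e + 1), |c (i + 1)|) * (n + e).choose e := by
  rw [binomialSum, sum_range_succ', add_comm, sum_mul, ← add_assoc, Nat.sub_zero]
  gcongr (_ + ?_)
  refine sum_le_sum fun i hi ↦ ?_
  have hi : i ≤ e := Nat.lt_succ_iff.1 (mem_range.1 hi)
  have hchoose : (n + e + 1 - (i + 1)).choose (e + 1 - (i + 1)) ≤ (n + e).choose e := by
    rw [show n + e + 1 - (i + 1) = n + (e - i) by omega, show e + 1 - (i + 1) = e - i by omega,
      ← Nat.choose_symm_add, ← Nat.choose_symm_add (b := e)]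
    exact Nat.choose_le_choose _ (by omega)
  calc _ ≤ |c (i + 1)| * ((n + e + 1 - (i + 1)).choose (e + 1 - (i + 1)) : ℤ) :=
        mul_le_mul_of_nonneg_right (le_abs_self _) (by positivity)
    _ ≤ |c (i + 1)| * (n + e).choose e := by gcongr

theorem nonneg_of_eventually_binomialSum_nonneg {e : ℕ} {c : ℕ → ℤ} {M : ℕ}
    (h : ∀ n ≥ M, 0 ≤ binomialSum e c n) : 0 ≤ c 0 := by
  rcases e with _ | e
  · simpa [binomialSum] using h M le_rfl
  by_contra! hc
  set B := ∑ i ∈ range (e + 1), |c (i + 1)|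
  set n := max M ((e + 1) * B).toNat + 1
  have hlead : ((n + e + 1).choose (e + 1) : ℤ) ≤ B * (n + e).choose e := by
    have := (h n (by omega)).trans (binomialSum_succ_le e c n)
    nlinarith [(by positivity : (0 : ℤ) ≤ (n + e + 1).choose (e + 1))]
  have hpascal : ((n + e + 1).choose (e + 1) : ℤ) * (e + 1) = (n + e + 1) * (n + e).choose e :=
    mod_cast (Nat.add_one_mul_choose_eq (n + e) e).symm
  have hpos : (0 : ℤ) < (n + e).choose e := mod_cast Nat.choose_pos (by omega)
  have : ((n : ℤ) + e + 1) * (n + e).choose e ≤ ((e + 1) * B) * (n + e).choose e := by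
    rw [← hpascal, mul_comm, mul_assoc]
    gcongr
  have := le_of_mul_le_mul_right this hpos
  have := Int.self_le_toNat ((e + 1) * B)
  omega

theorem coeff_one_le_of_binomialSum_le {e : ℕ} {c : ℕ → ℤ} {S : ℤ} {M : ℕ}
    (he : 1 ≤ e)
    (hlow : ∀ n ≥ M, 0 ≤ binomialSum e c n)
    (hup : ∀ n ≥ M, binomialSum e c n ≤ (n + e - 1).choose (e - 1) * S) : c 1 ≤ S := by
  obtain ⟨e, rfl⟩ := Nat.exists_eq_add_of_le' he
  have hgap : ∀ n ≥ M, 0 ≤ binomialSum (e + 1) (Pi.single 1 S - c) n := fun n hn ↦ by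
    simpa [binomialSum_sub, binomialSum_single_one] using hup n hn
  have hc0 : c 0 = 0 := le_antisymm
    (by simpa using nonneg_of_eventually_binomialSum_nonneg hgap)
    (nonneg_of_eventually_binomialSum_nonneg hlow)
  have := nonneg_of_eventually_binomialSum_nonneg fun n hn ↦
    (binomialSum_succ_of_eq_zero (c := Pi.single 1 S - c) (by simp [hc0]) n).symm ▸ hgap n hn
  simpa using this

theorem chern_number_filtration_bound_general {R : Type*} [CommRing R]
    (d : ℕ) (hd : 1 ≤ d)
    (x : Fin d → R)
    (J : Ideal R) (hJ : J = Ideal.span (Set.range x))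
    (F : ℕ → Ideal R) (hF0 : F 0 = ⊤)
    (hFmul : ∀ m n, F m * F n ≤ F (m + n))
    (hadm₁ : ∀ n, J ^ n ≤ F n)
    (lF lJ lJF : ℕ → ℕ)
    (hlF : ∀ n, HasLength R (R ⧸ F n) (lF n))
    (hlJ : ∀ n, HasLength R (R ⧸ J ^ n) (lJ n))
    (hlJF : ∀ n, HasLength R (R ⧸ (J * F n)) (lJF n))
    (eF eJ : ℕ → ℤ) (n0 : ℕ)
    (heF : ∀ n ≥ n0, (lF (n + 1) : ℤ) =
      ∑ i ∈ Finset.range (d + 1), (-1) ^ i * eF i * ((n + d - i).choose (d - i) : ℤ))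
    (heJ : ∀ n ≥ n0, (lJ (n + 1) : ℤ) =
      ∑ i ∈ Finset.range (d + 1), (-1) ^ i * eJ i * ((n + d - i).choose (d - i) : ℤ))
    (N : ℕ) (hstab : ∀ n ≥ N + 1, F n = J * F (n - 1)) :
    eF 1 ≤ eJ 1 + ∑ n ∈ Finset.Icc 1 N, ((lJF (n - 1) : ℤ) - (lF n : ℤ)) := by
  subst hJ
  have hF : ∀ m, Ideal.span (Set.range x) * F m ≤ F (m + 1) := fun m ↦
    (Ideal.mul_mono_left (by simpa using hadm₁ 1)).trans (by simpa [add_comm] using hFmul 1 m)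
  have hupper := fun n (hn : N ≤ n) ↦ Ideal.length_pow_succ_le_of_hasLength x hF0 hF
    (fun m _ ↦ by simpa using hstab (m + 1) (by omega)) hlF hlJ hlJF hn
  have hdiff : ∀ n ≥ n0, binomialSum d (fun i ↦ (-1) ^ i * eJ i - (-1) ^ i * eF i) n =
      lJ (n + 1) - lF (n + 1) := fun n hn ↦ by
    rw [heJ n hn, heF n hn, ← Pi.sub_def, binomialSum_sub]
    rfl
  have := coeff_one_le_of_binomialSum_le (M := max n0 N)
    (S := ∑ m ∈ range N, ((lJF m : ℤ) - lF (m + 1))) hd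
    (fun n hn ↦ by rw [hdiff n (by omega)]; simpa using (hlF _).le_of_le (hadm₁ _) (hlJ _))
    (fun n hn ↦ by rw [hdiff n (by omega)]; linarith [hupper n (by omega)])
  have hreindex : ∑ n ∈ Icc 1 N, ((lJF (n - 1) : ℤ) - lF n) =
      ∑ m ∈ range N, ((lJF m : ℤ) - lF (m + 1)) := by
    rw [← Ico_add_one_right_eq_Icc, sum_Ico_eq_sum_range]
    simp [add_comm]
  simp only [pow_one] at this
  linarith

/-- Let `(R, m)` be a `d`-dimensional Noetherian local ring, `J` a parameter
ideal, and `F = {Jₙ}` a `J`-admissible filtration.  Let `A = R[Jt]` (the Rees algebra of `J`),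
`B = ⨁ₙ Jₙ tⁿ` (realized as the subalgebra of `R[t]` of polynomials whose `n`-th coefficient
lies in `Jₙ`), and let `C = (A :_A B)` be the conductor.  If `ht C = 1`
(the height being the infimum of `Order.height` over primes of `A` containing `C`), then
`e₁(F) ≤ e₁(J) + ∑_{n ≥ 1} λ(Jₙ / J·J_{n−1})`; here `λ(Jₙ/J J_{n−1}) = λ(R/J Jₙ₋₁) − λ(R/Jₙ)`
and the sum is finite since `Jₙ = J·Jₙ₋₁` for `n > N`. -/
theorem chern_number_filtration_bound {R : Type*} [CommRing R] [IsNoetherianRing R]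
    [IsLocalRing R]
    (d : ℕ) (hd : 1 ≤ d) (hdim : ringKrullDim R = d)
    (x : Fin d → R) (hx : ∀ i, x i ∈ IsLocalRing.maximalIdeal R)
    (J : Ideal R) (hJ : J = Ideal.span (Set.range x))
    (hJlen : ∃ l : ℕ, HasLength R (R ⧸ J) l)
    (F : ℕ → Ideal R) (hF0 : F 0 = ⊤) (hFmono : ∀ n, F (n + 1) ≤ F n)
    (hFmul : ∀ m n, F m * F n ≤ F (m + n))
    (hadm₁ : ∀ n, J ^ n ≤ F n) (hadm₂ : ∃ k, ∀ n, F (n + k) ≤ J ^ n)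
    (B : Subalgebra R (Polynomial R))
    (hB : ∀ p : Polynomial R, p ∈ B ↔ ∀ n, p.coeff n ∈ F n)
    (C : Ideal (reesAlgebra J))
    (hC : ∀ a : reesAlgebra J, a ∈ C ↔ ∀ b ∈ B, (a : Polynomial R) * b ∈ reesAlgebra J)
    (hht : sInf {h : ℕ∞ | ∃ P : PrimeSpectrum (reesAlgebra J),
      C ≤ P.asIdeal ∧ h = Order.height P} = 1)
    (lF lJ lJF : ℕ → ℕ)
    (hlF : ∀ n, HasLength R (R ⧸ F n) (lF n))
    (hlJ : ∀ n, HasLength R (R ⧸ J ^ n) (lJ n))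
    (hlJF : ∀ n, HasLength R (R ⧸ (J * F n)) (lJF n))
    (eF eJ : ℕ → ℤ) (n0 : ℕ)
    (heF : ∀ n ≥ n0, (lF (n + 1) : ℤ) =
      ∑ i ∈ Finset.range (d + 1), (-1) ^ i * eF i * ((n + d - i).choose (d - i) : ℤ))
    (heJ : ∀ n ≥ n0, (lJ (n + 1) : ℤ) =
      ∑ i ∈ Finset.range (d + 1), (-1) ^ i * eJ i * ((n + d - i).choose (d - i) : ℤ))
    (N : ℕ) (hstab : ∀ n ≥ N + 1, F n = J * F (n - 1)) :
    eF 1 ≤ eJ 1 + ∑ n ∈ Finset.Icc 1 N, ((lJF (n - 1) : ℤ) - (lF n : ℤ)) :=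
  chern_number_filtration_bound_general d hd x J hJ F hF0 hFmul hadm₁ lF lJ lJF hlF hlJ hlJF eF eJ
    n0 heF heJ N hstab
end
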